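/- (Nash-Williams) For any finite simple graph G with at least one edge, the arboricity of G equals the maximum, over all subgraphs H of G with at least 2 vertices, of ⌈|E(H)| / (|V(H)| − 1)⌉. -/

import Mathlib

/-!
A forest has at most `|V(H)| - 1` edges inside the vertex set of a subgraph `H`, so `k` forests
covering `G` give `|E(H)| ≤ k (|V(H)| - 1)`; hence the arboricity is at least every ratio in the
formula.

Conversely (Nash-Williams' exchange argument), suppose `|E(G[U])| ≤ k (|U| - 1)` for every `U` and
take `k` edge-disjoint forests with the largest total number of edges. If an edge `xy` is left
over, every forest already joins `x` to `y`, and exchanging `xy` for any edge of such a path gives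
another maximum packing, which leaves that edge over instead. Call an edge freeable if some
sequence of exchanges leaves it over. The edge an exchange adds to a forest joins two vertices
already joined there by freeable edges, so such connections in any reachable packing hold in the
original one too. Hence each of the `k` original forests spans, by freeable edges, the component
`U` of `x` in the graph of freeable edges, and `G[U]` has at least `k (|U| - 1) + 1` edges, a
contradiction.
-/

open SimpleGraph

/-- The arboricity of `G`: the minimum number of edge-disjoint forests (acyclic spanning
subgraphs) into which the edge set of `G` can be decomposed. -/
noncomputable def arboricity {V : Type*} (G : SimpleGraph V) : ℕ :=
  sInf {t | ∃ F : Fin t → SimpleGraph V,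
    (∀ i, F i ≤ G ∧ (F i).IsAcyclic) ∧
    (Pairwise fun i j => Disjoint (F i).edgeSet (F j).edgeSet) ∧
    (⋃ i, (F i).edgeSet) = G.edgeSet}

open Function

namespace SimpleGraph

variable {V W ι : Type*}

lemma IsAcyclic.ncard_edgeSet_add_one_le [Finite W] [Nonempty W] {A : SimpleGraph W}
    (hA : A.IsAcyclic) : A.edgeSet.ncard + 1 ≤ Nat.card W := by
  obtain ⟨T, hAT, -, hT⟩ := connected_top.exists_isTree_le_of_le_of_isAcyclic le_top hA
  rw [← (isTree_iff_connected_and_card.mp hT).2, Nat.card_coe_set_eq]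
  exact Nat.add_le_add_right (Set.ncard_le_ncard (edgeSet_mono hAT)) 1

lemma ncard_edgeSet_le_of_le_iSup_isAcyclic [Finite W] [Nonempty W] [Fintype ι]
    {A : ι → SimpleGraph W} {B : SimpleGraph W} (hA : ∀ i, (A i).IsAcyclic)
    (hB : B ≤ ⨆ i, A i) : B.edgeSet.ncard ≤ Fintype.card ι * (Nat.card W - 1) := by
  calc B.edgeSet.ncard ≤ (⋃ i, (A i).edgeSet).ncard := by
        rw [← edgeSet_iSup]; exact Set.ncard_le_ncard (edgeSet_mono hB)
    _ ≤ ∑ i, (A i).edgeSet.ncard := Set.ncard_iUnion_le_of_fintype _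
    _ ≤ ∑ _i : ι, (Nat.card W - 1) := Finset.sum_le_sum fun i _ => by
        have := (hA i).ncard_edgeSet_add_one_le; omega
    _ = Fintype.card ι * (Nat.card W - 1) := by simp

lemma card_mul_lt_ncard_edgeSet_of_connected [Finite W] [Fintype ι] {A : ι → SimpleGraph W}
    {B : SimpleGraph W} (hA : ∀ i, (A i).Connected) (hAB : ∀ i, A i ≤ B)
    (hdisj : Pairwise fun i j => Disjoint (A i) (A j)) {x y : W} (hxy : B.Adj x y)
    (hx : ∀ i, ¬(A i).Adj x y) :
    Fintype.card ι * (Nat.card W - 1) < B.edgeSet.ncard := by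
  have hunion : (⋃ i, (A i).edgeSet) ⊂ B.edgeSet :=
    (Set.ssubset_iff_of_subset (Set.iUnion_subset fun i => edgeSet_mono (hAB i))).2
      ⟨s(x, y), hxy, by simpa using hx⟩
  calc Fintype.card ι * (Nat.card W - 1) = ∑ _i : ι, (Nat.card W - 1) := by simp
    _ ≤ ∑ i, (A i).edgeSet.ncard := Finset.sum_le_sum fun i _ => by
        have := (hA i).card_vert_le_card_edgeSet_add_one
        rw [Nat.card_coe_set_eq] at this; omega
    _ = (⋃ i, (A i).edgeSet).ncard := by
        rw [Set.ncard_iUnion_of_finite (fun _ => Set.toFinite _)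
          fun i j hij => disjoint_edgeSet.2 (hdisj hij), finsum_eq_sum_of_fintype]
    _ < B.edgeSet.ncard := Set.ncard_lt_ncard hunion

lemma Subgraph.ncard_edgeSet_coe {G : SimpleGraph V} (H : G.Subgraph) :
    H.coe.edgeSet.ncard = H.edgeSet.ncard := by
  rw [← H.image_coe_edgeSet_coe,
    Set.ncard_image_of_injective _ (Sym2.map.injective Subtype.val_injective)]

lemma Subgraph.ncard_edgeSet_le_of_subset_iUnion [Finite V] [Fintype ι] {G : SimpleGraph V}
    (H : G.Subgraph) (hH : H.verts.Nonempty) {F : ι → SimpleGraph V}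
    (hF : ∀ i, (F i).IsAcyclic) (hcover : H.edgeSet ⊆ ⋃ i, (F i).edgeSet) :
    H.edgeSet.ncard ≤ Fintype.card ι * (H.verts.ncard - 1) := by
  have : Nonempty H.verts := hH.to_subtype
  rw [← H.ncard_edgeSet_coe, ← Nat.card_coe_set_eq]
  refine ncard_edgeSet_le_of_le_iSup_isAcyclic (A := fun i => (F i).induce H.verts)
    (fun i => (hF i).induce H.verts) fun a b hab => ?_
  obtain ⟨i, hi⟩ := Set.mem_iUnion.1 (hcover (Subgraph.mem_edgeSet.2 hab))
  exact SimpleGraph.iSup_adj.2 ⟨i, hi⟩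

lemma IsAcyclic.not_reachable_deleteEdges_of_mem_edges {G : SimpleGraph V} (hG : G.IsAcyclic)
    {x y : V} {p : G.Walk x y} (hp : p.IsPath) {g : Sym2 V} (hg : g ∈ p.edges) :
    ¬(G.deleteEdges {g}).Reachable x y := by
  classical
  induction g using Sym2.ind with | _ a b => ?_
  rw [reachable_deleteEdges_iff_exists_walk]
  rintro ⟨q, hq⟩
  have hpq : p = q.bypass :=
    congrArg Subtype.val ((hG.subsingleton_path x y).elim ⟨p, hp⟩ ⟨_, q.bypass_isPath⟩)
  exact hq (q.edges_bypass_subset_edges (hpq ▸ hg))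

lemma ncard_edgeSet_sup_edge [Finite V] {H : SimpleGraph V} {x y : V} (hxy : x ≠ y)
    (h : ¬H.Adj x y) : (H ⊔ edge x y).edgeSet.ncard = H.edgeSet.ncard + 1 := by
  rw [edgeSet_sup, edgeSet_edge_of_ne hxy, Set.union_singleton,
    Set.ncard_insert_of_notMem (s := H.edgeSet) h]

lemma sum_ncard_edgeSet_update [Fintype ι] [DecidableEq ι] (F : ι → SimpleGraph V) (i : ι)
    (H : SimpleGraph V) :
    ∑ j, (update F i H j).edgeSet.ncard + (F i).edgeSet.ncard =
      ∑ j, (F j).edgeSet.ncard + H.edgeSet.ncard := by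
  rw [← Finset.add_sum_erase _ _ (Finset.mem_univ i),
    ← Finset.add_sum_erase _ _ (Finset.mem_univ i), update_self,
    Finset.sum_congr rfl fun j hj => by rw [update_of_ne (Finset.ne_of_mem_erase hj)]]
  ring

lemma Reachable.of_forall_adj {H K : SimpleGraph V} (h : ∀ a b, H.Adj a b → K.Reachable a b)
    {u v : V} (huv : H.Reachable u v) : K.Reachable u v := by
  rw [reachable_iff_reflTransGen] at huv ⊢
  exact Relation.ReflTransGen.lift' id
    (fun a b hab => (reachable_iff_reflTransGen a b).1 (h a b hab)) u v huv

structure IsForestPacking (G : SimpleGraph V) (F : ι → SimpleGraph V) : Prop where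
  le : ∀ i, F i ≤ G
  isAcyclic : ∀ i, (F i).IsAcyclic
  pairwise_disjoint : Pairwise fun i j => Disjoint (F i) (F j)

variable {G : SimpleGraph V} {F F' F₀ : ι → SimpleGraph V}

lemma isForestPacking_bot : IsForestPacking G fun _ : ι => ⊥ :=
  ⟨fun _ => bot_le, fun _ => isAcyclic_bot, fun _ _ _ => disjoint_bot_left⟩

lemma IsForestPacking.update [DecidableEq ι] (hF : IsForestPacking G F) {i : ι}
    {H : SimpleGraph V} (hH : H ≤ F i) {x y : V} (hxy : (G \ ⨆ j, F j).Adj x y)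
    (hr : ¬H.Reachable x y) : IsForestPacking G (update F i (H ⊔ edge x y)) := by
  have hdisj : ∀ j ≠ i, Disjoint (H ⊔ edge x y) (F j) := fun j hj => by
    refine disjoint_sup_left.2 ⟨(hF.pairwise_disjoint hj.symm).mono_left hH, ?_⟩
    rw [← disjoint_edgeSet, Set.disjoint_left]
    intro e he he'
    rw [Set.mem_singleton_iff.1 (edgeSet_edge_subset he)] at he'
    exact hxy.2 (iSup_adj.2 ⟨j, he'⟩)
  refine ⟨fun j => ?_, fun j => ?_, fun j j' hjj' => ?_⟩
  · rcases eq_or_ne j i with rfl | hj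
    · rw [update_self]
      exact sup_le (hH.trans (hF.le j)) ((edge_le_iff _).2 (Or.inr hxy.1))
    · rw [update_of_ne hj]
      exact hF.le j
  · rcases eq_or_ne j i with rfl | hj
    · rw [update_self]
      exact ((hF.isAcyclic j).anti hH).sup_edge_of_not_reachable hr
    · rw [update_of_ne hj]
      exact hF.isAcyclic j
  · rcases eq_or_ne j i with rfl | hj
    · rw [update_self, update_of_ne hjj'.symm]
      exact hdisj j' hjj'.symm
    rcases eq_or_ne j' i with rfl | hj'
    · rw [update_self, update_of_ne hj]
      exact (hdisj j hj).symm
    · rw [update_of_ne hj, update_of_ne hj']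
      exact hF.pairwise_disjoint hjj'

def IsMaxForestPacking [Fintype ι] (G : SimpleGraph V) (F : ι → SimpleGraph V) : Prop :=
  IsForestPacking G F ∧ ∀ F' : ι → SimpleGraph V, IsForestPacking G F' →
    ∑ i, (F' i).edgeSet.ncard ≤ ∑ i, (F i).edgeSet.ncard

lemma exists_isMaxForestPacking [Finite V] [Fintype ι] (G : SimpleGraph V) :
    ∃ F : ι → SimpleGraph V, IsMaxForestPacking G F := by
  let P := {F : ι → SimpleGraph V // IsForestPacking G F}
  have : Nonempty P := ⟨⟨_, isForestPacking_bot⟩⟩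
  obtain ⟨⟨F, hF⟩, hmax⟩ := Finite.exists_max fun F : P => ∑ i, (F.1 i).edgeSet.ncard
  exact ⟨F, hF, fun F' hF' => hmax ⟨F', hF'⟩⟩

lemma IsMaxForestPacking.reachable [Finite V] [Fintype ι] (hF : IsMaxForestPacking G F)
    {x y : V} (hxy : (G \ ⨆ j, F j).Adj x y) (i : ι) : (F i).Reachable x y := by
  classical
  by_contra hr
  have h₁ := hF.2 _ (hF.1.update le_rfl hxy hr)
  have h₂ := sum_ncard_edgeSet_update F i (F i ⊔ edge x y)
  have h₃ := ncard_edgeSet_sup_edge hxy.1.ne fun h => hxy.2 (iSup_adj.2 ⟨i, h⟩)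
  omega

-- `g` lies on the path of `F i` from `x` to `y`, phrased as: deleting `g` separates `x` from `y`.
def IsExchange [DecidableEq ι] (G : SimpleGraph V) (F F' : ι → SimpleGraph V) : Prop :=
  ∃ i x y g, (G \ ⨆ j, F j).Adj x y ∧ g ∈ (F i).edgeSet ∧
    ¬((F i).deleteEdges {g}).Reachable x y ∧ F' = update F i ((F i).deleteEdges {g} ⊔ edge x y)

section Exchange

variable [Finite V] [Fintype ι] [DecidableEq ι]

lemma IsMaxForestPacking.of_isExchange (hF : IsMaxForestPacking G F) (h : IsExchange G F F') :
    IsMaxForestPacking G F' := by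
  obtain ⟨i, x, y, g, hxy, hg, hr, rfl⟩ := h
  refine ⟨hF.1.update (deleteEdges_le _) hxy hr, fun F'' hF'' => ?_⟩
  have h₁ := hF.2 F'' hF''
  have h₂ := sum_ncard_edgeSet_update F i ((F i).deleteEdges {g} ⊔ edge x y)
  have h₃ := ncard_edgeSet_sup_edge (H := (F i).deleteEdges {g}) hxy.1.ne
    fun h => hxy.2 (iSup_adj.2 ⟨i, deleteEdges_le _ h⟩)
  have h₄ : ((F i).deleteEdges {g}).edgeSet.ncard + 1 = (F i).edgeSet.ncard := by
    rw [edgeSet_deleteEdges]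
    exact Set.ncard_sdiff_singleton_add_one hg
  omega

lemma IsMaxForestPacking.of_reflTransGen (hF : IsMaxForestPacking G F)
    (h : Relation.ReflTransGen (IsExchange G) F F') : IsMaxForestPacking G F' := by
  induction h with
  | refl => exact hF
  | tail _ hex ih => exact ih.of_isExchange hex

def freeable (G : SimpleGraph V) (F₀ : ι → SimpleGraph V) : SimpleGraph V :=
  ⨆ F : {F // Relation.ReflTransGen (IsExchange G) F₀ F}, G \ ⨆ j, F.1 j

lemma IsMaxForestPacking.reachable_inf_freeable_of_unused (hF₀ : IsMaxForestPacking G F₀)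
    (hF : Relation.ReflTransGen (IsExchange G) F₀ F) {x y : V} (hxy : (G \ ⨆ j, F j).Adj x y)
    (i : ι) : (F i ⊓ freeable G F₀).Reachable x y := by
  classical
  have hmax := hF₀.of_reflTransGen hF
  obtain ⟨p, hp⟩ := (hmax.reachable hxy i).exists_isPath
  refine ⟨p.transfer _ fun g hg => ?_⟩
  have hgF : g ∈ (F i).edgeSet := p.edges_subset_edgeSet hg
  have hex : IsExchange G F (update F i ((F i).deleteEdges {g} ⊔ edge x y)) :=
    ⟨i, x, y, g, hxy, hgF,
      (hmax.1.isAcyclic i).not_reachable_deleteEdges_of_mem_edges hp hg, rfl⟩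
  rw [edgeSet_inf, freeable, edgeSet_iSup]
  refine ⟨hgF, Set.mem_iUnion.2 ⟨⟨_, hF.tail hex⟩, ?_⟩⟩
  rw [edgeSet_sdiff, edgeSet_iSup]
  refine ⟨edgeSet_mono (hmax.1.le i) hgF, ?_⟩
  simp only [Set.mem_iUnion, not_exists]
  intro j hj
  rcases eq_or_ne j i with rfl | hji
  · rw [update_self, edgeSet_sup, edgeSet_deleteEdges] at hj
    rcases hj with ⟨-, hg'⟩ | hg'
    · exact hg' rfl
    · rw [Set.mem_singleton_iff.1 (edgeSet_edge_subset hg')] at hgF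
      exact hxy.2 (iSup_adj.2 ⟨j, hgF⟩)
  · rw [update_of_ne hji] at hj
    exact Set.disjoint_left.1 (disjoint_edgeSet.2 (hmax.1.pairwise_disjoint hji)) hj hgF

lemma IsExchange.reachable_inf_freeable_of_reachable (hF₀ : IsMaxForestPacking G F₀)
    (hF : Relation.ReflTransGen (IsExchange G) F₀ F) (hex : IsExchange G F F') (i : ι) {u v : V}
    (h : (F' i ⊓ freeable G F₀).Reachable u v) : (F i ⊓ freeable G F₀).Reachable u v := by
  obtain ⟨i₀, x, y, g, hxy, -, -, rfl⟩ := hex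
  rcases eq_or_ne i i₀ with rfl | hi
  · rw [update_self] at h
    refine h.of_forall_adj fun a b hab => ?_
    obtain ⟨hab | hab, hL⟩ := hab
    · exact Adj.reachable ⟨deleteEdges_le _ hab, hL⟩
    · obtain ⟨⟨rfl, rfl⟩ | ⟨rfl, rfl⟩, -⟩ := (edge_adj _ _ _ _).1 hab
      · exact hF₀.reachable_inf_freeable_of_unused hF hxy i
      · exact (hF₀.reachable_inf_freeable_of_unused hF hxy i).symm
  · rwa [update_of_ne hi] at h

lemma IsMaxForestPacking.reachable_inf_freeable_of_reflTransGen (hF₀ : IsMaxForestPacking G F₀)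
    (hF : Relation.ReflTransGen (IsExchange G) F₀ F) (i : ι) {u v : V}
    (h : (F i ⊓ freeable G F₀).Reachable u v) : (F₀ i ⊓ freeable G F₀).Reachable u v := by
  induction hF generalizing u v with
  | refl => exact h
  | tail hF' hex ih => exact ih (hex.reachable_inf_freeable_of_reachable hF₀ hF' i h)

lemma IsMaxForestPacking.reachable_inf_freeable_iff (hF₀ : IsMaxForestPacking G F₀) (i : ι)
    {u v : V} : (F₀ i ⊓ freeable G F₀).Reachable u v ↔ (freeable G F₀).Reachable u v := by
  refine ⟨fun h => h.mono inf_le_right, Reachable.of_forall_adj fun a b hab => ?_⟩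
  obtain ⟨⟨F, hF⟩, hab⟩ := iSup_adj.1 hab
  exact hF₀.reachable_inf_freeable_of_reflTransGen hF i
    (hF₀.reachable_inf_freeable_of_unused hF hab i)

theorem IsMaxForestPacking.iSup_eq (hF₀ : IsMaxForestPacking G F₀)
    (hG : ∀ U : Set V, 2 ≤ Nat.card U →
      (G.induce U).edgeSet.ncard ≤ Fintype.card ι * (Nat.card U - 1)) :
    ⨆ i, F₀ i = G := by
  refine le_antisymm (iSup_le hF₀.1.le) fun x y hxy => by_contra fun hx => ?_
  set L := freeable G F₀
  set U := (L.connectedComponentMk x).supp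
  have hL : L.Adj x y := iSup_adj.2 ⟨⟨F₀, .refl⟩, hxy, hx⟩
  have hconn : ∀ i, ((F₀ i).induce U).Connected := fun i => by
    have hsupp : ((F₀ i ⊓ L).connectedComponentMk x).supp = U := by
      ext v
      simp only [U, ConnectedComponent.mem_supp_iff, ConnectedComponent.eq]
      exact hF₀.reachable_inf_freeable_iff i
    have : ((F₀ i ⊓ L).induce ((F₀ i ⊓ L).connectedComponentMk x).supp).Connected :=
      ((F₀ i ⊓ L).connectedComponentMk x).connected_toSimpleGraph
    rw [hsupp] at this
    refine this.mono fun a b h => ?_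
    exact h.1
  have hxU : x ∈ U := rfl
  have hyU : y ∈ U := ConnectedComponent.eq.2 hL.reachable.symm
  have : Nontrivial U := ⟨⟨x, hxU⟩, ⟨y, hyU⟩, fun h => hxy.ne (congrArg Subtype.val h)⟩
  have hlt := card_mul_lt_ncard_edgeSet_of_connected (A := fun i => (F₀ i).induce U)
    (B := G.induce U) hconn
    (fun i a b h => hF₀.1.le i h)
    (fun i j hij => disjoint_iff_inf_le.2 fun a b h =>
      ((hF₀.1.pairwise_disjoint hij).le_bot ⟨h.1, h.2⟩).elim)
    (x := ⟨x, hxU⟩) (y := ⟨y, hyU⟩) hxy fun i h => hx (iSup_adj.2 ⟨i, h⟩)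
  exact (hG U Finite.one_lt_card).not_gt hlt

end Exchange

theorem exists_isForestPacking_iSup_eq [Finite V] [Fintype ι]
    (hG : ∀ U : Set V, 2 ≤ Nat.card U →
      (G.induce U).edgeSet.ncard ≤ Fintype.card ι * (Nat.card U - 1)) :
    ∃ F : ι → SimpleGraph V, IsForestPacking G F ∧ ⨆ i, F i = G := by
  classical
  obtain ⟨F, hF⟩ := exists_isMaxForestPacking (ι := ι) G
  exact ⟨F, hF.1, hF.iSup_eq hG⟩

end SimpleGraph

section

variable {V : Type*}

lemma ceil_div_sub_one_le_iff {m n k : ℕ} (hn : 2 ≤ n) :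
    ⌈(m : ℚ) / ((n : ℚ) - 1)⌉ ≤ k ↔ m ≤ k * (n - 1) := by
  have hcast : ((n - 1 : ℕ) : ℚ) = n - 1 := by rw [Nat.cast_sub (by omega), Nat.cast_one]
  have hpos : (0 : ℚ) < n - 1 := by rw [← hcast]; exact_mod_cast (by omega : 0 < n - 1)
  rw [Int.ceil_le, div_le_iff₀ hpos, ← hcast]
  norm_cast

lemma exists_forest_decomposition_of_forall_subgraph [Finite V] {G : SimpleGraph V} {k : ℕ}
    (hG : ∀ H : G.Subgraph, 2 ≤ H.verts.ncard → H.edgeSet.ncard ≤ k * (H.verts.ncard - 1)) :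
    ∃ F : Fin k → SimpleGraph V, (∀ i, F i ≤ G ∧ (F i).IsAcyclic) ∧
      (Pairwise fun i j => Disjoint (F i).edgeSet (F j).edgeSet) ∧
      (⋃ i, (F i).edgeSet) = G.edgeSet := by
  obtain ⟨F, hF, hcover⟩ := exists_isForestPacking_iSup_eq (G := G) (ι := Fin k) fun U hU => by
    have hE : (G.induce U).edgeSet.ncard = ((⊤ : G.Subgraph).induce U).edgeSet.ncard := by
      rw [induce_eq_coe_induce_top]
      exact Subgraph.ncard_edgeSet_coe _
    rw [hE, Nat.card_coe_set_eq, Fintype.card_fin]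
    exact hG _ (by rwa [← Nat.card_coe_set_eq])
  exact ⟨F, fun i => ⟨hF.le i, hF.isAcyclic i⟩,
    fun i j hij => disjoint_edgeSet.2 (hF.pairwise_disjoint hij),
    by rw [← edgeSet_iSup, hcover]⟩

lemma ncard_edgeSet_le_arboricity_mul [Finite V] {G : SimpleGraph V} (H : G.Subgraph)
    (hH : H.verts.Nonempty) : H.edgeSet.ncard ≤ arboricity G * (H.verts.ncard - 1) := by
  have hmem : arboricity G ∈ _ := Nat.sInf_mem ⟨G.edgeSet.ncard,
    exists_forest_decomposition_of_forall_subgraph fun H' hH' =>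
      (Set.ncard_le_ncard H'.edgeSet_subset).trans (Nat.le_mul_of_pos_right _ (by omega))⟩
  obtain ⟨F, hF, -, hcover⟩ := hmem
  simpa using
    H.ncard_edgeSet_le_of_subset_iUnion hH (fun i => (hF i).2) (hcover ▸ H.edgeSet_subset)

end

theorem arboricity_eq_sSup_ceil_general {V : Type*} [Fintype V] (G : SimpleGraph V) :
    arboricity G = sSup {t : ℕ | ∃ H : G.Subgraph, 2 ≤ H.verts.ncard ∧
      (t : ℤ) = ⌈(H.edgeSet.ncard : ℚ) / ((H.verts.ncard : ℚ) - 1)⌉} := by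
  set S := {t : ℕ | ∃ H : G.Subgraph, 2 ≤ H.verts.ncard ∧
      (t : ℤ) = ⌈(H.edgeSet.ncard : ℚ) / ((H.verts.ncard : ℚ) - 1)⌉}
  have hS : ∀ t ∈ S, t ≤ arboricity G := by
    rintro t ⟨H, hH, ht⟩
    have := (ceil_div_sub_one_le_iff hH).2
      (ncard_edgeSet_le_arboricity_mul H (Set.nonempty_of_ncard_ne_zero (by omega)))
    omega
  refine le_antisymm
    (Nat.sInf_le (exists_forest_decomposition_of_forall_subgraph fun H hH => ?_)) (csSup_le' hS)
  have h0 : (0 : ℚ) ≤ (H.edgeSet.ncard : ℚ) / ((H.verts.ncard : ℚ) - 1) :=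
    div_nonneg (Nat.cast_nonneg _) (sub_nonneg.2 (Nat.one_le_cast.2 (by omega)))
  obtain ⟨t, ht⟩ := Int.eq_ofNat_of_zero_le (Int.ceil_nonneg h0)
  rw [← ceil_div_sub_one_le_iff hH, ht, Nat.cast_le]
  exact le_csSup ⟨_, hS⟩ ⟨H, hH, ht.symm⟩

/-- (Nash-Williams) For any finite simple graph with at least one edge, the arboricity
equals the maximum over all subgraphs `H` with at least two vertices of
`⌈|E(H)| / (|V(H)| - 1)⌉`. -/
theorem arboricity_eq_sSup_ceil {V : Type*} [Fintype V] (G : SimpleGraph V)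
    (hG : G.edgeSet.Nonempty) :
    arboricity G = sSup {t : ℕ | ∃ H : G.Subgraph, 2 ≤ H.verts.ncard ∧
      (t : ℤ) = ⌈(H.edgeSet.ncard : ℚ) / ((H.verts.ncard : ℚ) - 1)⌉} :=
  arboricity_eq_sSup_ceil_general G
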